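/- Let H, E, ι, λ > 0 and f ∈ H be as in the context, and suppose ‖f‖_{E*} > 1/(2λ). If u₀ ∈ E minimizes the functional u ↦ ‖u‖_E + λ‖f − ι(u)‖_H² over E, then v := f − ι(u₀) satisfies ‖v‖_{E*} = 1/(2λ) and ⟨ι(u₀), v⟩_H = (1/(2λ))‖u₀‖_E. -/

import Mathlib

/-! Perturbing the minimizer `u₀` to `u₀ + t • e` and letting `t → 0⁺` gives the first-order
condition `2λ ⟨f - ι u₀, ι e⟩ ≤ ‖e‖`, with equality `2λ ⟨f - ι u₀, ι u₀⟩ = ‖u₀‖` along the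
ray through `u₀`, where the norm is linear. The first bound caps the dual norm of `f - ι u₀`
at `1/(2λ)`, and the equality shows that `u₀ / ‖u₀‖` attains the cap; `u₀ ≠ 0` because
otherwise the cap would apply to `f` itself. -/

open MeasureTheory

noncomputable section

/-- The dual norm `‖f‖_{E*} = sup { ⟨f, ι e⟩ : ‖e‖ ≤ 1 }` of `f ∈ H` relative to the
continuous embedding `ι : E → H`. -/
def dualNorm {E H : Type*} [NormedAddCommGroup E] [NormedSpace ℝ E]
    [NormedAddCommGroup H] [InnerProductSpace ℝ H] (ι : E →L[ℝ] H) (f : H) : ℝ :=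
  sSup {r : ℝ | ∃ e : E, ‖e‖ ≤ 1 ∧ r = inner ℝ f (ι e)}

open Filter Topology

lemma le_of_forall_mul_le_mul_add_sq {a b c : ℝ}
    (h : ∀ t : ℝ, 0 < t → t ≤ 1 → t * a ≤ t * b + c * t ^ 2) : a ≤ b := by
  have hlim : Tendsto (fun t : ℝ => b + c * t) (𝓝[>] 0) (𝓝 b) := by
    have : Continuous fun t : ℝ => b + c * t := by fun_prop
    simpa using (this.tendsto 0).mono_left nhdsWithin_le_nhds
  refine ge_of_tendsto hlim ?_
  filter_upwards [Ioc_mem_nhdsGT one_pos] with t ⟨ht, ht1⟩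
  have := h t ht ht1
  have : t * a ≤ t * (b + c * t) := by linarith
  exact le_of_mul_le_mul_left this ht

section DualNorm

variable {E H : Type*} [NormedAddCommGroup E] [NormedSpace ℝ E]
  [NormedAddCommGroup H] [InnerProductSpace ℝ H] (ι : E →L[ℝ] H)

lemma dualNorm_le {f : H} {C : ℝ} (h : ∀ e : E, ‖e‖ ≤ 1 → inner ℝ f (ι e) ≤ C) :
    dualNorm ι f ≤ C :=
  csSup_le ⟨0, 0, by simp, by simp⟩ (by rintro r ⟨e, he, rfl⟩; exact h e he)

lemma inner_le_dualNorm (f : H) {e : E} (he : ‖e‖ ≤ 1) : inner ℝ f (ι e) ≤ dualNorm ι f := by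
  refine le_csSup ⟨‖f‖ * ‖ι‖, ?_⟩ ⟨e, he, rfl⟩
  rintro r ⟨e, he, rfl⟩
  calc inner ℝ f (ι e) ≤ ‖f‖ * ‖ι e‖ := real_inner_le_norm _ _
    _ ≤ ‖f‖ * (‖ι‖ * 1) := by gcongr; exact ι.le_opNorm_of_le he
    _ = ‖f‖ * ‖ι‖ := by rw [mul_one]

end DualNorm

section Minimizer

variable {E H : Type*} [NormedAddCommGroup E] [NormedSpace ℝ E]
  [NormedAddCommGroup H] [InnerProductSpace ℝ H] {ι : E →L[ℝ] H} {lam : ℝ} {f : H} {u₀ : E}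

lemma two_mul_inner_variation_le
    (hmin : ∀ u : E, ‖u₀‖ + lam * ‖f - ι u₀‖ ^ 2 ≤ ‖u‖ + lam * ‖f - ι u‖ ^ 2) (e : E) (t : ℝ) :
    t * (2 * lam * inner ℝ (f - ι u₀) (ι e)) ≤
      ‖u₀ + t • e‖ - ‖u₀‖ + lam * ‖ι e‖ ^ 2 * t ^ 2 := by
  have hm := hmin (u₀ + t • e)
  have hres : f - ι (u₀ + t • e) = (f - ι u₀) - t • ι e := by
    rw [map_add, map_smul]; abel
  rw [hres, norm_sub_sq_real (f - ι u₀), real_inner_smul_right, norm_smul, mul_pow,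
    Real.norm_eq_abs, sq_abs] at hm
  linarith

lemma two_mul_inner_le_norm
    (hmin : ∀ u : E, ‖u₀‖ + lam * ‖f - ι u₀‖ ^ 2 ≤ ‖u‖ + lam * ‖f - ι u‖ ^ 2) (e : E) :
    2 * lam * inner ℝ (f - ι u₀) (ι e) ≤ ‖e‖ := by
  refine le_of_forall_mul_le_mul_add_sq (c := lam * ‖ι e‖ ^ 2) fun t ht _ => ?_
  have htri : ‖u₀ + t • e‖ ≤ ‖u₀‖ + t * ‖e‖ := by
    simpa [norm_smul, abs_of_pos ht] using norm_add_le u₀ (t • e)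
  linarith [two_mul_inner_variation_le hmin e t]

lemma two_mul_inner_self_eq_norm
    (hmin : ∀ u : E, ‖u₀‖ + lam * ‖f - ι u₀‖ ^ 2 ≤ ‖u‖ + lam * ‖f - ι u‖ ^ 2) :
    2 * lam * inner ℝ (f - ι u₀) (ι u₀) = ‖u₀‖ := by
  refine (two_mul_inner_le_norm hmin u₀).antisymm
    (le_of_forall_mul_le_mul_add_sq (c := lam * ‖ι u₀‖ ^ 2) fun t ht ht1 => ?_)
  have hshrink : ‖u₀ + (-t) • u₀‖ = (1 - t) * ‖u₀‖ := by
    rw [show u₀ + (-t) • u₀ = (1 - t) • u₀ by module, norm_smul, Real.norm_eq_abs,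
      abs_of_nonneg (by linarith)]
  linarith [two_mul_inner_variation_le hmin u₀ (-t)]

end Minimizer

theorem stmt2_general {E H : Type*} [NormedAddCommGroup E] [NormedSpace ℝ E]
    [NormedAddCommGroup H] [InnerProductSpace ℝ H]
    (ι : E →L[ℝ] H)
    (lam : ℝ) (hlam : 0 < lam) (f : H)
    (hf : 1 / (2 * lam) < dualNorm ι f) (u₀ : E)
    (hmin : ∀ u : E, ‖u₀‖ + lam * ‖f - ι u₀‖ ^ 2 ≤ ‖u‖ + lam * ‖f - ι u‖ ^ 2) :
    dualNorm ι (f - ι u₀) = 1 / (2 * lam) ∧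
      (inner ℝ (ι u₀) (f - ι u₀) : ℝ) = (1 / (2 * lam)) * ‖u₀‖ := by
  have hbound : ∀ e : E, ‖e‖ ≤ 1 → inner ℝ (f - ι u₀) (ι e) ≤ 1 / (2 * lam) := fun e he => by
    rw [le_div_iff₀ (by positivity)]
    linarith [two_mul_inner_le_norm hmin e]
  have hpair := two_mul_inner_self_eq_norm hmin
  have hu₀ : u₀ ≠ 0 := by
    rintro rfl
    simp only [map_zero, sub_zero] at hbound
    exact hf.not_ge (dualNorm_le ι hbound)
  have hnorm : ‖‖u₀‖⁻¹ • u₀‖ = 1 := norm_smul_inv_norm hu₀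
  have hattain : inner ℝ (f - ι u₀) (ι (‖u₀‖⁻¹ • u₀)) = 1 / (2 * lam) := by
    rw [map_smul, real_inner_smul_right]
    field_simp
    linarith
  refine ⟨(dualNorm_le ι hbound).antisymm (hattain ▸ inner_le_dualNorm ι _ hnorm.le), ?_⟩
  rw [real_inner_comm]
  field_simp
  linarith

/-- if `‖f‖_{E*} > 1/(2λ)` and `u₀` minimizes
`u ↦ ‖u‖_E + λ‖f − ι u‖²`, then `v = f − ι u₀` satisfies `‖v‖_{E*} = 1/(2λ)` and
`⟨ι u₀, v⟩ = (1/(2λ)) ‖u₀‖_E`. -/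
theorem stmt2 {E H : Type*} [NormedAddCommGroup E] [NormedSpace ℝ E]
    [NormedAddCommGroup H] [InnerProductSpace ℝ H]
    (ι : E →L[ℝ] H) (hι : Function.Injective ι)
    (lam : ℝ) (hlam : 0 < lam) (f : H)
    (hf : 1 / (2 * lam) < dualNorm ι f) (u₀ : E)
    (hmin : ∀ u : E, ‖u₀‖ + lam * ‖f - ι u₀‖ ^ 2 ≤ ‖u‖ + lam * ‖f - ι u‖ ^ 2) :
    dualNorm ι (f - ι u₀) = 1 / (2 * lam) ∧
      (inner ℝ (ι u₀) (f - ι u₀) : ℝ) = (1 / (2 * lam)) * ‖u₀‖ :=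
  stmt2_general ι lam hlam f hf u₀ hmin
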